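/- arXiv:1607.05144 — 2 statements merged into one kernel-verified Lean document; each statement's English description precedes it below -/
import Mathlib

section
/- Let L = (l₁, …, lₙ) be a nonempty finite list of positive integers with total N = l₁ + ⋯ + lₙ, and let f : ℕ → ℝ satisfy 0 ≤ f(l) ≤ 1 for every l ≥ 1. Then S_f(L) ≤ ((N − 1)/N)², and equality holds when all lᵢ = 1 (i.e. n = N). -/
/-- The SALZA conditional complexity estimate `S_f(L) = 𝒮 · 𝒵` associated with
the list `L` of symbol lengths and the admissible function `f`. -/
noncomputable def salza (f : ℕ → ℝ) (L : List ℕ) : ℝ :=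
  (1 - ((L.map (fun l : ℕ => (l : ℝ) * f l)).sum - ((L.map (fun l : ℕ => f l)).sum - 1)) /
      (L.sum : ℝ)) *
    (((L.length : ℝ) - 1) / (L.sum : ℝ))

lemma salza_aux_split (f : ℕ → ℝ) (L : List ℕ) :
    (L.map (fun l : ℕ => f l + ((l:ℝ) - 1))).sum
      = (L.map (fun l : ℕ => f l)).sum + ((L.sum : ℝ) - L.length) := by
  induction L with
  | nil => simp
  | cons a t ih =>
    simp only [List.map_cons, List.sum_cons, List.length_cons, List.sum_cons]
    rw [ih]
    push_cast
    ring

/-- For a nonempty list `L` of positive integers with total `N` and an admissible `f`,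
`S_f(L) ≤ ((N − 1)/N)²`, with equality when all the `lᵢ` equal `1`. -/
theorem salza_le_sq (L : List ℕ) (hL : L ≠ []) (hpos : ∀ l ∈ L, 1 ≤ l)
    (f : ℕ → ℝ) (hf : ∀ l : ℕ, 1 ≤ l → 0 ≤ f l ∧ f l ≤ 1) :
    salza f L ≤ (((L.sum : ℝ) - 1) / (L.sum : ℝ)) ^ 2 ∧
      ((∀ l ∈ L, l = 1) → salza f L = (((L.sum : ℝ) - 1) / (L.sum : ℝ)) ^ 2) := by
  have hn1 : 1 ≤ L.length := List.length_pos_iff.2 hL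
  have hNn : L.length ≤ L.sum := List.length_le_sum_of_one_le L hpos
  have hNpos : 0 < L.sum := lt_of_lt_of_le hn1 hNn
  have hNR : (0:ℝ) < (L.sum : ℝ) := by exact_mod_cast hNpos
  have hnR : (1:ℝ) ≤ (L.length : ℝ) := by exact_mod_cast hn1
  have hNnR : (L.length : ℝ) ≤ (L.sum : ℝ) := by exact_mod_cast hNn
  set A := (L.map (fun l : ℕ => (l : ℝ) * f l)).sum with hA
  set B := (L.map (fun l : ℕ => f l)).sum with hB
  have hBA : B ≤ A := by
    apply List.sum_le_sum
    intro l hl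
    have h1 := hpos l hl
    have h2 := (hf l h1).1
    have h3 : (1:ℝ) ≤ (l:ℝ) := by exact_mod_cast h1
    nlinarith
  have hAB : A ≤ B + ((L.sum : ℝ) - L.length) := by
    have key : A ≤ (L.map (fun l : ℕ => f l + ((l:ℝ) - 1))).sum := by
      apply List.sum_le_sum
      intro l hl
      have h1 := hpos l hl
      obtain ⟨h2, h3⟩ := hf l h1
      have h4 : (1:ℝ) ≤ (l:ℝ) := by exact_mod_cast h1
      nlinarith
    rw [salza_aux_split f L] at key
    exact key
  set N : ℝ := (L.sum : ℝ)
  set n : ℝ := (L.length : ℝ)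
  have hS0 : 0 ≤ 1 - (A - (B - 1)) / N := by
    rw [sub_nonneg, div_le_one hNR]; linarith
  have hS1 : 1 - (A - (B - 1)) / N ≤ (N - 1) / N := by
    rw [show (N-1)/N = 1 - 1/N by field_simp]
    have h1 : (1:ℝ) ≤ A - (B-1) := by linarith
    gcongr
  have hZ0 : 0 ≤ (n - 1) / N := div_nonneg (by linarith) (le_of_lt hNR)
  have hZ1 : (n - 1) / N ≤ (N - 1) / N := by
    gcongr
  constructor
  · unfold salza
    have := mul_le_mul hS1 hZ1 hZ0 (div_nonneg (by linarith) (le_of_lt hNR))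
    calc (1 - (A - (B - 1)) / N) * ((n - 1) / N) ≤ (N-1)/N * ((N-1)/N) := this
      _ = ((N-1)/N)^2 := (sq ((N-1)/N)).symm
  · intro hall
    unfold salza
    have hAB' : A = B := by
      apply le_antisymm _ hBA
      have : L.map (fun l : ℕ => (l : ℝ) * f l) = L.map (fun l : ℕ => f l) := by
        apply List.map_congr_left
        intro l hl
        rw [hall l hl]; simp
      rw [hA, this, hB]
    have hsum : L.sum = L.length := by
      have hrep : L = List.replicate L.length 1 := by
        apply List.eq_replicate_of_mem
        intro b hb; exact hall b hb
      rw [hrep]; simp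
    have hnN : n = N := by
      simp only [n, N, hsum]
    show (1 - (A - (B - 1)) / N) * ((n - 1) / N) = ((N - 1) / N) ^ 2
    rw [hAB', hnN]
    field_simp
    ring
end

section
/- Let n ≥ 1 and M ≥ 2 be integers. Suppose the SALZA factorization consists of M(n+1) literals of length 1 together with one reference of length M (total N = M(n+2)), and f : ℕ → ℝ is the threshold function with f(1) = 0 and f(M) = 1. Then S_f(L) = (1 − M/(M(n+2))) · (M(n+1)/(M(n+2))) = (n+1)²/(n+2)². -/
/-- If the factorization consists of `M(n+1)` literals of length `1` and one reference of
length `M` (total `N = M(n+2)`), and `f` is the threshold function with `f 1 = 0` and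
`f M = 1`, then `S_f(L) = (1 − M/(M(n+2)))·(M(n+1)/(M(n+2))) = (n+1)²/(n+2)²`. -/
theorem salza_counterexample_xy (n M : ℕ) (hn : 1 ≤ n) (hM : 2 ≤ M)
    (f : ℕ → ℝ) (hf1 : f 1 = 0) (hfM : f M = 1) :
    salza f (List.replicate (M * (n + 1)) 1 ++ [M]) =
        (1 - (M : ℝ) / ((M : ℝ) * ((n : ℝ) + 2))) *
          ((M : ℝ) * ((n : ℝ) + 1) / ((M : ℝ) * ((n : ℝ) + 2))) ∧
      salza f (List.replicate (M * (n + 1)) 1 ++ [M]) =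
        ((n : ℝ) + 1) ^ 2 / ((n : ℝ) + 2) ^ 2 := by
  have hM0 : (M : ℝ) ≠ 0 := by positivity
  have key : salza f (List.replicate (M * (n + 1)) 1 ++ [M]) =
      (1 - (M : ℝ) / ((M : ℝ) * ((n : ℝ) + 2))) *
        ((M : ℝ) * ((n : ℝ) + 1) / ((M : ℝ) * ((n : ℝ) + 2))) := by
    simp [salza, List.map_replicate, List.sum_replicate, hf1, hfM, mul_comm]
    ring_nf
  refine ⟨key, key.trans ?_⟩
  have h2 : ((n : ℝ) + 2) ≠ 0 := by positivity
  field_simp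
  ring
end
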